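/- arXiv:0712.3688 — 2 statements merged into one kernel-verified Lean document; each statement's English description precedes it below -/
import Mathlib

section
/- For nonempty compact metric spaces (X,d), (X',d') equipped with nonempty compact subsets C_1, …, C_k ⊆ X and C_1', …, C_k' ⊆ X', the k-marked Gromov–Hausdorff distance admits the characterization: d_GH^k((X,d,(C_1,…,C_k)),(X',d',(C_1',…,C_k'))) = (1/2) · inf{dis ℛ : ℛ a compact correspondence between X and X' such that for every 1 ≤ i ≤ k the set ℛ ∩ (C_i × C_i') is a correspondence between C_i and C_i'}. -/
/-! A correspondence `R` with distortion at most `2c`, `c > 0`, glues `X` and `Y` into one metric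
space in which every related pair is at distance exactly `c` (`Metric.glueMetricApprox`), so
`R` bounds every marked Hausdorff distance by `c`. Conversely, if a glue metric `δ` puts all the
marked Hausdorff distances below `ε`, the pairs at `δ`-distance at most `ε` form a closed, hence
compact, correspondence restricting to a correspondence between each pair of marked sets, and
the triangle inequality bounds its distortion by `2ε`. -/

open Set

section MarkedGH

variable {X Y : Type*}

/-- A "glue metric": a metric on the disjoint union `X ⊕ Y` whose restrictions to `X`
and `Y` coincide with the given metrics. -/
structure IsGlueMetric [MetricSpace X] [MetricSpace Y] (δ : X ⊕ Y → X ⊕ Y → ℝ) : Prop where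
  refl : ∀ a, δ a a = 0
  pos : ∀ a b, a ≠ b → 0 < δ a b
  symm : ∀ a b, δ a b = δ b a
  triangle : ∀ a b c, δ a c ≤ δ a b + δ b c
  restr_left : ∀ x x' : X, δ (Sum.inl x) (Sum.inl x') = dist x x'
  restr_right : ∀ y y' : Y, δ (Sum.inr y) (Sum.inr y') = dist y y'

/-- The Hausdorff distance in `(X ⊕ Y, δ)` between (the images of) `A ⊆ X` and
`B ⊆ Y`: the infimum of `ε > 0` such that each set is contained in the open
`ε`-neighborhood of the other. -/
noncomputable def glueHausdorffDist (δ : X ⊕ Y → X ⊕ Y → ℝ) (A : Set X) (B : Set Y) : ℝ :=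
  sInf {ε : ℝ | 0 < ε ∧ (∀ x ∈ A, ∃ y ∈ B, δ (Sum.inl x) (Sum.inr y) < ε) ∧
    (∀ y ∈ B, ∃ x ∈ A, δ (Sum.inl x) (Sum.inr y) < ε)}

/-- The `k`-marked Gromov–Hausdorff distance between `(X, (C_i))` and `(Y, (C'_i))`. -/
noncomputable def markedGHDist [MetricSpace X] [MetricSpace Y] (k : ℕ)
    (C : Fin k → Set X) (C' : Fin k → Set Y) : ℝ :=
  sInf {r : ℝ | ∃ δ : X ⊕ Y → X ⊕ Y → ℝ, IsGlueMetric δ ∧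
    r = max (glueHausdorffDist δ Set.univ Set.univ)
      (⨆ i : Fin k, glueHausdorffDist δ (C i) (C' i))}

/-- A correspondence between `X` and `Y`. -/
def IsCorrespondence (R : Set (X × Y)) : Prop :=
  (∀ x : X, ∃ y : Y, (x, y) ∈ R) ∧ (∀ y : Y, ∃ x : X, (x, y) ∈ R)

/-- The distortion of a correspondence. -/
noncomputable def distortion [MetricSpace X] [MetricSpace Y] (R : Set (X × Y)) : ℝ :=
  sSup {r : ℝ | ∃ p ∈ R, ∃ q ∈ R, r = |dist p.1 q.1 - dist p.2 q.2|}

end MarkedGH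

open Sum Metric

section Correspondence

variable {X Y : Type*}

def IsCorrespondenceOn (A : Set X) (B : Set Y) (R : Set (X × Y)) : Prop :=
  (∀ x ∈ A, ∃ y ∈ B, (x, y) ∈ R) ∧ (∀ y ∈ B, ∃ x ∈ A, (x, y) ∈ R)

theorem isCorrespondenceOn_univ_univ_iff {R : Set (X × Y)} :
    IsCorrespondenceOn univ univ R ↔ IsCorrespondence R := by
  simp [IsCorrespondenceOn, IsCorrespondence]

theorem isCorrespondenceOn_univ {A : Set X} {B : Set Y} (hA : A.Nonempty) (hB : B.Nonempty) :
    IsCorrespondenceOn A B (univ : Set (X × Y)) :=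
  ⟨fun _ _ => ⟨hB.some, hB.some_mem, trivial⟩, fun _ _ => ⟨hA.some, hA.some_mem, trivial⟩⟩

theorem IsCorrespondence.nonempty [Nonempty X] {R : Set (X × Y)} (hR : IsCorrespondence R) :
    R.Nonempty :=
  let ⟨_, h⟩ := hR.1 (Classical.arbitrary X)
  ⟨_, h⟩

end Correspondence

section Distortion

variable {X Y : Type*} [MetricSpace X] [MetricSpace Y]

theorem distortion_nonneg (R : Set (X × Y)) : 0 ≤ distortion R :=
  Real.sSup_nonneg (by rintro _ ⟨p, -, q, -, rfl⟩; exact abs_nonneg _)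

theorem distortion_le {R : Set (X × Y)} {c : ℝ} (hc : 0 ≤ c)
    (h : ∀ p ∈ R, ∀ q ∈ R, |dist p.1 q.1 - dist p.2 q.2| ≤ c) : distortion R ≤ c :=
  Real.sSup_le (by rintro _ ⟨p, hp, q, hq, rfl⟩; exact h p hp q hq) hc

theorem abs_dist_sub_dist_le_distortion [BoundedSpace X] [BoundedSpace Y] {R : Set (X × Y)}
    {p q : X × Y} (hp : p ∈ R) (hq : q ∈ R) : |dist p.1 q.1 - dist p.2 q.2| ≤ distortion R := by
  refine le_csSup ⟨diam (univ : Set X) + diam (univ : Set Y), ?_⟩ ⟨p, hp, q, hq, rfl⟩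
  rintro _ ⟨p, -, q, -, rfl⟩
  have hX := dist_le_diam_of_mem BoundedSpace.bounded_univ (mem_univ p.1) (mem_univ q.1)
  have hY := dist_le_diam_of_mem BoundedSpace.bounded_univ (mem_univ p.2) (mem_univ q.2)
  rw [abs_sub_le_iff]
  constructor <;> linarith [dist_nonneg (x := p.1) (y := q.1), dist_nonneg (x := p.2) (y := q.2)]

end Distortion

section GlueMetric

variable {X Y : Type*} [MetricSpace X] [MetricSpace Y]

def closePairs (δ : X ⊕ Y → X ⊕ Y → ℝ) (ε : ℝ) : Set (X × Y) :=
  {p | δ (inl p.1) (inr p.2) ≤ ε}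

namespace IsGlueMetric

theorem of_isometry [MetricSpace (X ⊕ Y)] (hl : Isometry (inl : X → X ⊕ Y))
    (hr : Isometry (inr : Y → X ⊕ Y)) : IsGlueMetric (dist : X ⊕ Y → X ⊕ Y → ℝ) where
  refl := dist_self
  pos _ _ h := dist_pos.2 h
  symm := dist_comm
  triangle := dist_triangle
  restr_left := hl.dist_eq
  restr_right := hr.dist_eq

variable {δ : X ⊕ Y → X ⊕ Y → ℝ} (hδ : IsGlueMetric δ)
include hδ

theorem cross_le_add_left (x x' : X) (y : Y) :
    δ (inl x) (inr y) ≤ δ (inl x') (inr y) + dist x x' :=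
  calc δ (inl x) (inr y) ≤ δ (inl x) (inl x') + δ (inl x') (inr y) := hδ.triangle ..
    _ = δ (inl x') (inr y) + dist x x' := by rw [hδ.restr_left, add_comm]

theorem cross_le_add_right (x : X) (y y' : Y) :
    δ (inl x) (inr y) ≤ δ (inl x) (inr y') + dist y y' :=
  calc δ (inl x) (inr y) ≤ δ (inl x) (inr y') + δ (inr y') (inr y) := hδ.triangle ..
    _ = δ (inl x) (inr y') + dist y y' := by rw [hδ.restr_right, dist_comm]

theorem continuous_cross : Continuous fun p : X × Y => δ (inl p.1) (inr p.2) :=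
  (LipschitzWith.uncurry (f := fun x y => δ (inl x) (inr y))
    (fun y => .of_le_add fun x x' => hδ.cross_le_add_left x x' y)
    (fun x => .of_le_add (hδ.cross_le_add_right x))).continuous

theorem dist_le_cross_add_cross_left (x x' : X) (y y' : Y) :
    dist x x' ≤ δ (inl x) (inr y) + δ (inl x') (inr y') + dist y y' :=
  calc dist x x' = δ (inl x) (inl x') := (hδ.restr_left x x').symm
    _ ≤ δ (inl x) (inr y) + (δ (inr y) (inr y') + δ (inr y') (inl x')) :=
      (hδ.triangle ..).trans (by gcongr; exact hδ.triangle ..)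
    _ = δ (inl x) (inr y) + δ (inl x') (inr y') + dist y y' := by
      rw [hδ.restr_right, hδ.symm (inr y')]; ring

theorem dist_le_cross_add_cross_right (x x' : X) (y y' : Y) :
    dist y y' ≤ δ (inl x) (inr y) + δ (inl x') (inr y') + dist x x' :=
  calc dist y y' = δ (inr y) (inr y') := (hδ.restr_right y y').symm
    _ ≤ δ (inr y) (inl x) + (δ (inl x) (inl x') + δ (inl x') (inr y')) :=
      (hδ.triangle ..).trans (by gcongr; exact hδ.triangle ..)
    _ = δ (inl x) (inr y) + δ (inl x') (inr y') + dist x x' := by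
      rw [hδ.restr_left, hδ.symm (inr y)]; ring

theorem abs_dist_sub_dist_le (x x' : X) (y y' : Y) :
    |dist x x' - dist y y'| ≤ δ (inl x) (inr y) + δ (inl x') (inr y') :=
  abs_sub_le_iff.2 ⟨by linarith [hδ.dist_le_cross_add_cross_left x x' y y'],
    by linarith [hδ.dist_le_cross_add_cross_right x x' y y']⟩

theorem isCompact_closePairs [CompactSpace X] [CompactSpace Y] (ε : ℝ) :
    IsCompact (closePairs δ ε) :=
  (isClosed_le hδ.continuous_cross continuous_const).isCompact

theorem distortion_closePairs_le {ε : ℝ} (hε : 0 ≤ ε) : distortion (closePairs δ ε) ≤ 2 * ε :=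
  distortion_le (by positivity) fun p hp q hq =>
    (hδ.abs_dist_sub_dist_le p.1 q.1 p.2 q.2).trans (by rw [two_mul]; exact add_le_add hp hq)

end IsGlueMetric

end GlueMetric

section HausdorffDist

variable {X Y : Type*} {δ : X ⊕ Y → X ⊕ Y → ℝ} {A : Set X} {B : Set Y}

theorem glueHausdorffDist_nonneg (δ : X ⊕ Y → X ⊕ Y → ℝ) (A : Set X) (B : Set Y) :
    0 ≤ glueHausdorffDist δ A B :=
  Real.sInf_nonneg fun _ h => h.1.le

theorem glueHausdorffDist_le_of_isCorrespondenceOn {R : Set (X × Y)} {c : ℝ} (hc : 0 < c)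
    (hR : IsCorrespondenceOn A B R) (hδ : ∀ p ∈ R, δ (inl p.1) (inr p.2) ≤ c) :
    glueHausdorffDist δ A B ≤ c := by
  refine le_of_forall_gt_imp_ge_of_dense fun ε hε =>
    csInf_le ⟨0, fun _ h => h.1.le⟩ ⟨hc.trans hε, fun x hx => ?_, fun y hy => ?_⟩
  · obtain ⟨y, hy, hxy⟩ := hR.1 x hx
    exact ⟨y, hy, (hδ _ hxy).trans_lt hε⟩
  · obtain ⟨x, hx, hxy⟩ := hR.2 y hy
    exact ⟨x, hx, (hδ _ hxy).trans_lt hε⟩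

theorem isCorrespondenceOn_closePairs [MetricSpace X] [MetricSpace Y] (hA : A.Nonempty)
    (hB : B.Nonempty) (hbdd : BddAbove (range fun p : X × Y => δ (inl p.1) (inr p.2)))
    {ε : ℝ} (h : glueHausdorffDist δ A B < ε) : IsCorrespondenceOn A B (closePairs δ ε) := by
  -- A bound on `δ` gives an admissible radius; otherwise the infimum would be `sInf ∅ = 0`.
  obtain ⟨M, hM⟩ := hbdd
  have hM' (x : X) (y : Y) : δ (inl x) (inr y) < max M 0 + 1 :=
    (hM ⟨(x, y), rfl⟩).trans_lt (by linarith [le_max_left M 0])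
  obtain ⟨s, ⟨-, hsA, hsB⟩, hsε⟩ := exists_lt_of_csInf_lt (by
    exact ⟨max M 0 + 1, by positivity, fun _ _ => ⟨hB.some, hB.some_mem, hM' _ _⟩,
      fun _ _ => ⟨hA.some, hA.some_mem, hM' _ _⟩⟩) h
  refine ⟨fun x hx => ?_, fun y hy => ?_⟩
  · obtain ⟨y, hy, hxy⟩ := hsA x hx
    exact ⟨y, hy, (hxy.trans hsε).le⟩
  · obtain ⟨x, hx, hxy⟩ := hsB y hy
    exact ⟨x, hx, (hxy.trans hsε).le⟩

end HausdorffDist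

section MarkedGHDist

variable {X Y : Type*} [MetricSpace X] [MetricSpace Y]

theorem exists_isGlueMetric : ∃ δ : X ⊕ Y → X ⊕ Y → ℝ, IsGlueMetric δ := by
  let := metricSpaceSum (X := X) (Y := Y)
  exact ⟨dist, .of_isometry isometry_inl isometry_inr⟩

theorem exists_isGlueMetric_cross_eq_of_correspondence {R : Set (X × Y)} (hR : R.Nonempty)
    {c : ℝ} (hc : 0 < c) (hdis : ∀ p ∈ R, ∀ q ∈ R, |dist p.1 q.1 - dist p.2 q.2| ≤ 2 * c) :
    ∃ δ : X ⊕ Y → X ⊕ Y → ℝ, IsGlueMetric δ ∧ ∀ p ∈ R, δ (inl p.1) (inr p.2) = c := by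
  have : Nonempty R := hR.to_subtype
  let := glueMetricApprox (fun p : R => p.1.1) (fun p : R => p.1.2) c hc
    fun p q => hdis p p.2 q q.2
  have hl : Isometry (inl : X → X ⊕ Y) := .of_dist_eq fun _ _ => rfl
  have hr : Isometry (inr : Y → X ⊕ Y) := .of_dist_eq fun _ _ => rfl
  exact ⟨dist, .of_isometry hl hr, fun p hp =>
    glueDist_glued_points (fun p : R => p.1.1) (fun p : R => p.1.2) c ⟨p, hp⟩⟩

variable {k : ℕ} {C : Fin k → Set X} {C' : Fin k → Set Y} {R : Set (X × Y)}

theorem markedGHDist_le_of_correspondence [Nonempty X] (hR : IsCorrespondence R)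
    (hRC : ∀ i, IsCorrespondenceOn (C i) (C' i) R) {c : ℝ} (hc : 0 < c)
    (hdis : ∀ p ∈ R, ∀ q ∈ R, |dist p.1 q.1 - dist p.2 q.2| ≤ 2 * c) :
    markedGHDist k C C' ≤ c := by
  obtain ⟨δ, hδ, hδR⟩ := exists_isGlueMetric_cross_eq_of_correspondence hR.nonempty hc hdis
  have hδc : ∀ p ∈ R, δ (inl p.1) (inr p.2) ≤ c := fun p hp => (hδR p hp).le
  refine le_trans (csInf_le ⟨0, ?_⟩ ⟨δ, hδ, rfl⟩) (max_le ?_ ?_)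
  · rintro _ ⟨δ, -, rfl⟩
    exact (glueHausdorffDist_nonneg ..).trans (le_max_left ..)
  · exact glueHausdorffDist_le_of_isCorrespondenceOn hc
      (isCorrespondenceOn_univ_univ_iff.2 hR) hδc
  · exact Real.iSup_le (fun i => glueHausdorffDist_le_of_isCorrespondenceOn hc (hRC i) hδc) hc.le

theorem two_mul_markedGHDist_le_distortion [BoundedSpace X] [BoundedSpace Y] [Nonempty X]
    (hR : IsCorrespondence R) (hRC : ∀ i, IsCorrespondenceOn (C i) (C' i) R) :
    2 * markedGHDist k C C' ≤ distortion R := by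
  suffices markedGHDist k C C' ≤ distortion R / 2 by linarith
  refine le_of_forall_gt_imp_ge_of_dense fun c hc => markedGHDist_le_of_correspondence hR hRC
    ((div_nonneg (distortion_nonneg R) zero_le_two).trans_lt hc) fun p hp q hq => ?_
  linarith [abs_dist_sub_dist_le_distortion hp hq]

theorem exists_compact_correspondence_distortion_le [CompactSpace X] [CompactSpace Y]
    [Nonempty X] [Nonempty Y] {δ : X ⊕ Y → X ⊕ Y → ℝ} (hδ : IsGlueMetric δ)
    (hC : ∀ i, (C i).Nonempty) (hC' : ∀ i, (C' i).Nonempty) {ε : ℝ}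
    (hε : max (glueHausdorffDist δ univ univ) (⨆ i, glueHausdorffDist δ (C i) (C' i)) < ε) :
    ∃ R : Set (X × Y), IsCompact R ∧ IsCorrespondence R ∧
      (∀ i, IsCorrespondenceOn (C i) (C' i) R) ∧ distortion R ≤ 2 * ε := by
  have hbdd := (isCompact_range hδ.continuous_cross).bddAbove
  have huniv : glueHausdorffDist δ univ univ < ε := (le_max_left ..).trans_lt hε
  refine ⟨closePairs δ ε, hδ.isCompact_closePairs ε,
    isCorrespondenceOn_univ_univ_iff.1 (isCorrespondenceOn_closePairs univ_nonempty univ_nonempty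
      hbdd huniv), fun i => isCorrespondenceOn_closePairs (hC i) (hC' i) hbdd ?_,
    hδ.distortion_closePairs_le ((glueHausdorffDist_nonneg ..).trans_lt huniv).le⟩
  exact ((le_ciSup (finite_range _).bddAbove i).trans (le_max_right ..)).trans_lt hε

end MarkedGHDist

/-- Characterization of the `k`-marked Gromov–Hausdorff distance via compact
correspondences respecting the marked compact sets. -/
theorem markedGHDist_eq_inf_correspondence
    {X Y : Type*} [MetricSpace X] [MetricSpace Y]
    [CompactSpace X] [CompactSpace Y] [Nonempty X] [Nonempty Y]
    (k : ℕ) (C : Fin k → Set X) (C' : Fin k → Set Y)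
    (hC : ∀ i, IsCompact (C i) ∧ (C i).Nonempty)
    (hC' : ∀ i, IsCompact (C' i) ∧ (C' i).Nonempty) :
    markedGHDist k C C' =
      (1 / 2 : ℝ) * sInf {r : ℝ | ∃ R : Set (X × Y), IsCompact R ∧ IsCorrespondence R ∧
        (∀ i, (∀ x ∈ C i, ∃ y ∈ C' i, (x, y) ∈ R) ∧ (∀ y ∈ C' i, ∃ x ∈ C i, (x, y) ∈ R)) ∧
        r = distortion R} := by
  set S := {r : ℝ | ∃ R : Set (X × Y), IsCompact R ∧ IsCorrespondence R ∧
    (∀ i, IsCorrespondenceOn (C i) (C' i) R) ∧ r = distortion R}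
  change markedGHDist k C C' = 1 / 2 * sInf S
  have hS_nonneg : ∀ r ∈ S, 0 ≤ r := by
    rintro _ ⟨R, -, -, -, rfl⟩
    exact distortion_nonneg R
  have hS_nonempty : S.Nonempty :=
    ⟨_, univ, isCompact_univ,
      isCorrespondenceOn_univ_univ_iff.1 (isCorrespondenceOn_univ univ_nonempty univ_nonempty),
      fun i => isCorrespondenceOn_univ (hC i).2 (hC' i).2, rfl⟩
  refine le_antisymm ?_ ?_
  · have := le_csInf hS_nonempty fun r ⟨R, _, hR, hRC, hr⟩ =>
      hr ▸ two_mul_markedGHDist_le_distortion hR hRC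
    linarith
  · obtain ⟨δ₀, hδ₀⟩ := exists_isGlueMetric (X := X) (Y := Y)
    refine le_csInf ⟨_, δ₀, hδ₀, rfl⟩ ?_
    rintro _ ⟨δ, hδ, rfl⟩
    refine le_of_forall_gt_imp_ge_of_dense fun ε hε => ?_
    obtain ⟨R, hRc, hR, hRC, hdis⟩ := exists_compact_correspondence_distortion_le hδ
      (fun i => (hC i).2) (fun i => (hC' i).2) hε
    linarith [csInf_le ⟨0, hS_nonneg⟩ ⟨R, hRc, hR, hRC, rfl⟩]
end

section
/- Let G be a finite connected bipartite simple graph with graph distance dist, let x_1, …, x_k be vertices of G and d_1, …, d_k integers such that dist(x_i, x_j) + d_i − d_j is even for all i, j. Then the function ℓ(x) := min_{1 ≤ i ≤ k} (d_i + dist(x, x_i)) satisfies |ℓ(x) − ℓ(y)| = 1 for every pair of adjacent vertices x, y of G. -/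
/-! Along an edge `u v` every term `d i + dist(·, x i)` moves by at most one, hence so does their
minimum `ℓ`. If `i` attains the minimum at `u` and `j` at `v`, then `ℓ u - ℓ v` differs from the
even number `dist(x i, x j) + d i - d j` by `dist(u, x i) + dist(x i, x j) + dist(x j, v)` modulo 2;
closed up by the edge `v u`, these three geodesics form a closed walk, so in a bipartite graph that
sum is odd. Being odd and at most one in absolute value, `ℓ u - ℓ v` is `±1`. -/

namespace Finset

variable {ι : Type*} {s : Finset ι} {f g : ι → ℤ}

theorem inf'_le_inf'_add_of_le_add (hs : s.Nonempty) {c : ℤ} (h : ∀ i ∈ s, f i ≤ g i + c) :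
    s.inf' hs f ≤ s.inf' hs g + c := by
  obtain ⟨j, hj, hgj⟩ := s.exists_mem_eq_inf' hs g
  rw [hgj]
  exact (s.inf'_le f hj).trans (h j hj)

theorem odd_inf'_sub_inf'_of_forall_odd_sub (hs : s.Nonempty)
    (h : ∀ i ∈ s, ∀ j ∈ s, Odd (f i - g j)) :
    Odd (s.inf' hs f - s.inf' hs g) := by
  obtain ⟨i, hi, hfi⟩ := s.exists_mem_eq_inf' hs f
  obtain ⟨j, hj, hgj⟩ := s.exists_mem_eq_inf' hs g
  rw [hfi, hgj]
  exact h i hi j hj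

end Finset

namespace SimpleGraph

variable {V : Type*} {G : SimpleGraph V} {u v : V}

theorem Adj.dist_le_dist_add_one (huv : G.Adj u v) (w : V) : G.dist u w ≤ G.dist v w + 1 := by
  have := huv.reachable.dist_triangle_left w
  rw [dist_eq_one_iff_adj.mpr huv] at this
  omega

theorem Connected.odd_dist_add_dist_add_dist_of_adj (hconn : G.Connected) (hbip : G.Colorable 2)
    (huv : G.Adj u v) (a b : V) : Odd (G.dist u a + G.dist a b + G.dist b v) := by
  obtain ⟨p, hp⟩ := hconn.exists_walk_length_eq_dist u a
  obtain ⟨q, hq⟩ := hconn.exists_walk_length_eq_dist a b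
  obtain ⟨r, hr⟩ := hconn.exists_walk_length_eq_dist b v
  have hloop :=
    two_colorable_iff_forall_loop_even.mp hbip u (p.append (q.append (r.concat huv.symm)))
  simp only [Walk.length_append, Walk.length_concat, hp, hq, hr, ← add_assoc] at hloop
  exact Nat.even_add_one.mp hloop |> Nat.not_even_iff_odd.mp

end SimpleGraph

open SimpleGraph in
theorem label_changes_by_one_general {V : Type*} (G : SimpleGraph V)
    (hconn : G.Connected)
    (hbip : ∃ c : V → Bool, ∀ u v : V, G.Adj u v → c u ≠ c v)
    (k : ℕ) (x : Fin (k + 1) → V) (d : Fin (k + 1) → ℤ)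
    (hpar : ∀ i j, Even ((G.dist (x i) (x j) : ℤ) + d i - d j)) :
    ∀ u v : V, G.Adj u v →
      |(Finset.univ.inf' Finset.univ_nonempty fun i => d i + (G.dist u (x i) : ℤ)) -
        (Finset.univ.inf' Finset.univ_nonempty fun i => d i + (G.dist v (x i) : ℤ))| = 1 := by
  intro u v huv
  have hcol : G.Colorable 2 := by
    obtain ⟨c, hc⟩ := hbip
    simpa using (Coloring.mk c fun h => hc _ _ h).colorable
  have hle {a b : V} (hab : G.Adj a b) :
      (Finset.univ.inf' Finset.univ_nonempty fun i => d i + (G.dist a (x i) : ℤ)) ≤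
        (Finset.univ.inf' Finset.univ_nonempty fun i => d i + (G.dist b (x i) : ℤ)) + 1 :=
    Finset.inf'_le_inf'_add_of_le_add _ fun i _ => by
      have := hab.dist_le_dist_add_one (x i)
      omega
  have hodd := Finset.odd_inf'_sub_inf'_of_forall_odd_sub Finset.univ_nonempty
    (f := fun i => d i + (G.dist u (x i) : ℤ)) (g := fun i => d i + (G.dist v (x i) : ℤ))
    fun i _ j _ => by
      obtain ⟨m, hm⟩ := hpar i j
      obtain ⟨n, hn⟩ := hconn.odd_dist_add_dist_add_dist_of_adj hcol huv (x i) (x j)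
      rw [dist_comm (u := x j)] at hn
      exact ⟨m - G.dist (x i) (x j) - G.dist v (x j) + n, by omega⟩
  obtain ⟨n, hn⟩ := hodd
  have h₁ := hle huv
  have h₂ := hle huv.symm
  rw [abs_eq zero_le_one]
  omega

/-- In a finite connected bipartite simple graph, if `x_0, …, x_k` are vertices and
`d_0, …, d_k` integers such that `dist(x_i,x_j) + d_i − d_j` is even for all `i, j`,
then `ℓ(x) = min_i (d_i + dist(x, x_i))` changes by exactly `1` along every edge. -/
theorem label_changes_by_one {V : Type*} [Fintype V] (G : SimpleGraph V)
    (hconn : G.Connected)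
    (hbip : ∃ c : V → Bool, ∀ u v : V, G.Adj u v → c u ≠ c v)
    (k : ℕ) (x : Fin (k + 1) → V) (d : Fin (k + 1) → ℤ)
    (hpar : ∀ i j, Even ((G.dist (x i) (x j) : ℤ) + d i - d j)) :
    ∀ u v : V, G.Adj u v →
      |(Finset.univ.inf' Finset.univ_nonempty fun i => d i + (G.dist u (x i) : ℤ)) -
        (Finset.univ.inf' Finset.univ_nonempty fun i => d i + (G.dist v (x i) : ℤ))| = 1 :=
  label_changes_by_one_general G hconn hbip k x d hpar
end
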